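/- Let ν > 0 and let B be a bounded linear operator on H_{ν,0}(ℝ) which is causal with operator norm C₁. Then for every φ ∈ H_{ν,0}(ℝ), |Re⟨χ_{(-∞,0]}φ, B ∂₀^{-1} φ⟩_{ν,0}| ≤ C₁ ν^{-1} |χ_{(-∞,0]}φ|²_{ν,0}. -/

import Mathlib

open MeasureTheory Complex

/-- The exponentially weighted measure `e^{-2νx} dx` on `ℝ`;
`Lp ℂ 2 (wMeasure ν)` is the space `H_{ν,0}(ℝ)`. -/
noncomputable def wMeasure (ν : ℝ) : Measure ℝ :=
  (volume : Measure ℝ).withDensity fun x => ENNReal.ofReal (Real.exp (-2 * ν * x))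

/-!
Write `φ = χφ + (1 - χ)φ` with `χ = χ_{(-∞,0]}`. Since `(1 - χ)φ` vanishes on `(-∞, 0]`, so do
`∂₀⁻¹ (1 - χ)φ` and, by causality, `B ∂₀⁻¹ (1 - χ)φ`; this is orthogonal to `χφ`. Hence the inner
product is `⟨χφ, B ∂₀⁻¹ χφ⟩`, bounded by `‖B‖ |∂₀⁻¹ χφ| |χφ|`. The bound `|∂₀⁻¹ ψ| ≤ ν⁻¹ |ψ|`
comes from Cauchy–Schwarz on `(-∞, x]` against the weight `e^{νt}`, followed by Tonelli.
-/

open Real Set Filter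
open scoped ENNReal

lemma ENNReal.ofReal_exp_add (a b : ℝ) :
    ENNReal.ofReal (exp (a + b)) = ENNReal.ofReal (exp a) * ENNReal.ofReal (exp b) := by
  rw [Real.exp_add, ENNReal.ofReal_mul (exp_nonneg a)]

lemma ENNReal.ofReal_exp_half_sq (s : ℝ) :
    ENNReal.ofReal (exp (s / 2)) ^ 2 = ENNReal.ofReal (exp s) := by
  rw [← ENNReal.ofReal_pow (exp_nonneg _), ← Real.exp_nat_mul]; congr 2; ring

lemma lintegral_ofReal_exp_mul_Iic {b : ℝ} (hb : 0 < b) (c : ℝ) :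
    ∫⁻ t in Iic c, ENNReal.ofReal (exp (b * t)) =
      ENNReal.ofReal b⁻¹ * ENNReal.ofReal (exp (b * c)) := by
  rw [← ofReal_integral_eq_lintegral_ofReal (integrableOn_exp_mul_Iic hb c)
    (.of_forall fun _ => (exp_pos _).le), integral_exp_mul_Iic hb, div_eq_inv_mul,
    ENNReal.ofReal_mul (inv_nonneg.2 hb.le)]

lemma lintegral_ofReal_exp_neg_mul_Ici {b : ℝ} (hb : 0 < b) (c : ℝ) :
    ∫⁻ t in Ici c, ENNReal.ofReal (exp (-b * t)) =
      ENNReal.ofReal b⁻¹ * ENNReal.ofReal (exp (-b * c)) := by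
  have hb' : -b < 0 := neg_neg_of_pos hb
  rw [← setLIntegral_congr Ioi_ae_eq_Ici,
    ← ofReal_integral_eq_lintegral_ofReal (integrableOn_exp_mul_Ioi hb' c)
    (.of_forall fun _ => (exp_pos _).le), integral_exp_mul_Ioi hb', neg_div_neg_eq,
    div_eq_inv_mul, ENNReal.ofReal_mul (inv_nonneg.2 hb.le)]

lemma ENNReal.sq_lintegral_mul_le {α : Type*} [MeasurableSpace α] {μ : Measure α}
    {f g : α → ℝ≥0∞} (hf : AEMeasurable f μ) (hg : AEMeasurable g μ) :
    (∫⁻ x, f x * g x ∂μ) ^ 2 ≤ (∫⁻ x, f x ^ 2 ∂μ) * ∫⁻ x, g x ^ 2 ∂μ := by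
  have hsqrt : ∀ X : ℝ≥0∞, (X ^ (1 / 2 : ℝ)) ^ 2 = X := fun X => by
    rw [← ENNReal.rpow_mul_natCast]; norm_num
  calc (∫⁻ x, f x * g x ∂μ) ^ 2
      ≤ ((∫⁻ x, f x ^ 2 ∂μ) ^ (1 / 2 : ℝ) * (∫⁻ x, g x ^ 2 ∂μ) ^ (1 / 2 : ℝ)) ^ 2 := by
        gcongr
        simpa using ENNReal.lintegral_mul_le_Lp_mul_Lq μ Real.HolderConjugate.two_two hf hg
    _ = (∫⁻ x, f x ^ 2 ∂μ) * ∫⁻ x, g x ^ 2 ∂μ := by rw [mul_pow, hsqrt, hsqrt]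

lemma lintegral_mul_setLIntegral_Iic {μ : Measure ℝ} [SFinite μ] {w F : ℝ → ℝ≥0∞}
    (hw : Measurable w) (hF : AEMeasurable F μ) :
    ∫⁻ x, w x * ∫⁻ t in Iic x, F t ∂μ ∂μ = ∫⁻ t, (∫⁻ x in Ici t, w x ∂μ) * F t ∂μ := by
  have hprod :
      AEMeasurable (Function.uncurry fun x t => w x * (Iic x).indicator F t) (μ.prod μ) := by
    have : (Function.uncurry fun x t => w x * (Iic x).indicator F t) =
        fun p : ℝ × ℝ => w p.1 * {p : ℝ × ℝ | p.2 ≤ p.1}.indicator (fun p => F p.2) p := by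
      ext ⟨x, t⟩; simp [indicator_apply]
    rw [this]
    exact (hw.comp measurable_fst).aemeasurable.mul
      (hF.comp_snd.indicator (measurableSet_le measurable_snd measurable_fst))
  calc ∫⁻ x, w x * ∫⁻ t in Iic x, F t ∂μ ∂μ
      = ∫⁻ x, ∫⁻ t, w x * (Iic x).indicator F t ∂μ ∂μ := by
        refine lintegral_congr fun x => ?_
        rw [lintegral_const_mul'' _ (hF.indicator measurableSet_Iic),
          lintegral_indicator measurableSet_Iic]
    _ = ∫⁻ t, ∫⁻ x, w x * (Iic x).indicator F t ∂μ ∂μ := lintegral_lintegral_swap hprod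
    _ = ∫⁻ t, (∫⁻ x in Ici t, w x ∂μ) * F t ∂μ := by
        refine lintegral_congr fun t => ?_
        rw [← lintegral_indicator measurableSet_Ici,
          ← lintegral_mul_const _ (hw.indicator measurableSet_Ici)]
        refine lintegral_congr fun x => ?_
        by_cases h : t ≤ x <;> simp [h]

lemma sq_setLIntegral_Iic_le {ν : ℝ} (hν : 0 < ν) {F : ℝ → ℝ≥0∞} (x : ℝ)
    (hF : AEMeasurable F (volume.restrict (Iic x))) :
    (∫⁻ t in Iic x, F t) ^ 2 ≤
      ENNReal.ofReal ν⁻¹ * ENNReal.ofReal (exp (ν * x)) *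
        ∫⁻ t in Iic x, ENNReal.ofReal (exp (-ν * t)) * F t ^ 2 := by
  have hsplit : ∀ t, F t =
      ENNReal.ofReal (exp (ν * t / 2)) * (ENNReal.ofReal (exp (-ν * t / 2)) * F t) := by
    intro t
    rw [← mul_assoc, ← ENNReal.ofReal_exp_add, neg_mul, neg_div, add_neg_cancel, Real.exp_zero,
      ENNReal.ofReal_one, one_mul]
  have hexp : ∀ c : ℝ,
      AEMeasurable (fun t => ENNReal.ofReal (exp (c * t / 2))) (volume.restrict (Iic x)) :=
    fun c => by fun_prop
  calc (∫⁻ t in Iic x, F t) ^ 2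
      = (∫⁻ t in Iic x, ENNReal.ofReal (exp (ν * t / 2)) *
          (ENNReal.ofReal (exp (-ν * t / 2)) * F t)) ^ 2 := by
        rw [lintegral_congr fun t => hsplit t]
    _ ≤ (∫⁻ t in Iic x, ENNReal.ofReal (exp (ν * t / 2)) ^ 2) *
          ∫⁻ t in Iic x, (ENNReal.ofReal (exp (-ν * t / 2)) * F t) ^ 2 :=
        ENNReal.sq_lintegral_mul_le (hexp ν) ((hexp (-ν)).mul hF)
    _ = ENNReal.ofReal ν⁻¹ * ENNReal.ofReal (exp (ν * x)) *
          ∫⁻ t in Iic x, ENNReal.ofReal (exp (-ν * t)) * F t ^ 2 := by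
        simp only [mul_pow, ENNReal.ofReal_exp_half_sq, lintegral_ofReal_exp_mul_Iic hν]

lemma volume_ac_wMeasure (ν : ℝ) : (volume : Measure ℝ) ≪ wMeasure ν :=
  withDensity_absolutelyContinuous' (by fun_prop) (.of_forall fun _ => by simp [exp_pos])

lemma wMeasure_ac_volume (ν : ℝ) : wMeasure ν ≪ volume :=
  withDensity_absolutelyContinuous _ _

lemma lintegral_wMeasure (ν : ℝ) {f : ℝ → ℝ≥0∞} (hf : AEMeasurable f volume) :
    ∫⁻ x, f x ∂wMeasure ν = ∫⁻ x, ENNReal.ofReal (exp (-2 * ν * x)) * f x :=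
  lintegral_withDensity_eq_lintegral_mul₀ (by fun_prop) hf

lemma Lp.norm_le_mul_norm_of_lintegral_sq_le {α E : Type*} [MeasurableSpace α] {μ : Measure α}
    [NormedAddCommGroup E] {c : ℝ} (hc : 0 ≤ c) {u v : Lp E 2 μ}
    (h : ∫⁻ x, ‖v x‖ₑ ^ 2 ∂μ ≤ ENNReal.ofReal c ^ 2 * ∫⁻ x, ‖u x‖ₑ ^ 2 ∂μ) :
    ‖v‖ ≤ c * ‖u‖ := by
  have hsq : ∀ w : Lp E 2 μ, eLpNorm w 2 μ ^ 2 = ∫⁻ x, ‖w x‖ₑ ^ 2 ∂μ := fun w => by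
    simpa using eLpNorm_nnreal_pow_eq_lintegral (f := w) (μ := μ) (p := 2) two_ne_zero
  have hle : eLpNorm v 2 μ ≤ ENNReal.ofReal c * eLpNorm u 2 μ := by
    rwa [← ENNReal.pow_le_pow_left_iff two_ne_zero, mul_pow, hsq, hsq]
  rw [Lp.norm_def, Lp.norm_def, ← ENNReal.toReal_ofReal hc, ← ENNReal.toReal_mul]
  exact ENNReal.toReal_mono (ENNReal.mul_ne_top ENNReal.ofReal_ne_top (Lp.eLpNorm_ne_top u)) hle

theorem norm_le_inv_mul_norm_of_ae_eq_integral_Iic {E : Type*} [NormedAddCommGroup E]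
    [NormedSpace ℝ E] {ν : ℝ} (hν : 0 < ν) {u v : Lp E 2 (wMeasure ν)}
    (hv : v =ᵐ[volume] fun x => ∫ t in Iic x, u t) :
    ‖v‖ ≤ ν⁻¹ * ‖u‖ := by
  refine Lp.norm_le_mul_norm_of_lintegral_sq_le (inv_nonneg.2 hν.le) ?_
  have hu : AEMeasurable (fun t => ‖u t‖ₑ) volume :=
    ((Lp.aestronglyMeasurable u).mono_ac (volume_ac_wMeasure ν)).enorm
  set F : ℝ → ℝ≥0∞ := fun t => ENNReal.ofReal (exp (-ν * t)) * ‖u t‖ₑ ^ 2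
  have hpointwise : ∀ᵐ x, ENNReal.ofReal (exp (-2 * ν * x)) * ‖v x‖ₑ ^ 2 ≤
      ENNReal.ofReal ν⁻¹ * (ENNReal.ofReal (exp (-ν * x)) * ∫⁻ t in Iic x, F t) := by
    filter_upwards [hv] with x hx
    calc ENNReal.ofReal (exp (-2 * ν * x)) * ‖v x‖ₑ ^ 2
        ≤ ENNReal.ofReal (exp (-2 * ν * x)) * (∫⁻ t in Iic x, ‖u t‖ₑ) ^ 2 := by
          rw [hx]; gcongr; exact enorm_integral_le_lintegral_enorm _
      _ ≤ ENNReal.ofReal (exp (-2 * ν * x)) *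
            (ENNReal.ofReal ν⁻¹ * ENNReal.ofReal (exp (ν * x)) * ∫⁻ t in Iic x, F t) := by
          gcongr; exact sq_setLIntegral_Iic_le hν x hu.restrict
      _ = ENNReal.ofReal ν⁻¹ * (ENNReal.ofReal (exp (-ν * x)) * ∫⁻ t in Iic x, F t) := by
          rw [show -ν * x = -2 * ν * x + ν * x by ring, ENNReal.ofReal_exp_add]; ring
  calc ∫⁻ x, ‖v x‖ₑ ^ 2 ∂wMeasure ν
      = ∫⁻ x, ENNReal.ofReal (exp (-2 * ν * x)) * ‖v x‖ₑ ^ 2 :=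
        lintegral_wMeasure ν
          (((Lp.aestronglyMeasurable v).mono_ac (volume_ac_wMeasure ν)).enorm.pow_const 2)
    _ ≤ ∫⁻ x, ENNReal.ofReal ν⁻¹ * (ENNReal.ofReal (exp (-ν * x)) * ∫⁻ t in Iic x, F t) :=
        lintegral_mono_ae hpointwise
    _ = ENNReal.ofReal ν⁻¹ *
          ∫⁻ t, ENNReal.ofReal ν⁻¹ * ENNReal.ofReal (exp (-ν * t)) * F t := by
        rw [lintegral_const_mul' _ _ ENNReal.ofReal_ne_top,
          lintegral_mul_setLIntegral_Iic (by fun_prop) (by fun_prop)]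
        simp_rw [lintegral_ofReal_exp_neg_mul_Ici hν]
    _ = ENNReal.ofReal ν⁻¹ ^ 2 * ∫⁻ t, ‖u t‖ₑ ^ 2 ∂wMeasure ν := by
        rw [lintegral_wMeasure ν (hu.pow_const 2), sq, mul_assoc]
        congr 1
        rw [← lintegral_const_mul' _ _ ENNReal.ofReal_ne_top]
        refine lintegral_congr fun t => ?_
        rw [show -2 * ν * t = -ν * t + -ν * t by ring, ENNReal.ofReal_exp_add]; ring

lemma setIntegral_Iic_eq_zero_of_ae_eq_zero {E : Type*} [NormedAddCommGroup E]
    [NormedSpace ℝ E] {μ : Measure ℝ} {u : ℝ → E} {a x : ℝ} (hu : ∀ᵐ t ∂μ, t ≤ a → u t = 0)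
    (hx : x ≤ a) :
    ∫ t in Iic x, u t ∂μ = 0 := by
  refine integral_eq_zero_of_ae ?_
  filter_upwards [ae_restrict_of_ae hu, ae_restrict_mem measurableSet_Iic] with t ht htx
  exact ht (le_trans htx hx)

lemma L2.inner_eq_zero_of_ae_eq_zero_or {α 𝕜 E : Type*} [MeasurableSpace α] {μ : Measure α}
    [RCLike 𝕜] [NormedAddCommGroup E] [InnerProductSpace 𝕜 E] {f g : Lp E 2 μ}
    (h : ∀ᵐ x ∂μ, f x = 0 ∨ g x = 0) : inner 𝕜 f g = 0 := by
  rw [L2.inner_def]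
  refine integral_eq_zero_of_ae ?_
  filter_upwards [h] with x hx
  rcases hx with hx | hx <;> simp [hx]

/-- Let `ν > 0`, `B` a bounded causal operator on `H_{ν,0}(ℝ)` with norm `C₁ = ‖B‖` and
`J = ∂₀⁻¹` the integration operator.  Then for every `φ`,
`|Re⟨χ_{(-∞,0]}φ, B∂₀⁻¹φ⟩_{ν,0}| ≤ C₁ ν⁻¹ |χ_{(-∞,0]}φ|²_{ν,0}`. -/
theorem causal_operator_estimate (ν : ℝ) (hν : 0 < ν)
    (B : Lp ℂ 2 (wMeasure ν) →L[ℂ] Lp ℂ 2 (wMeasure ν))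
    (hBcausal : ∀ (a : ℝ) (f : Lp ℂ 2 (wMeasure ν)),
      (∀ᵐ x ∂(volume : Measure ℝ), x ≤ a → (f : ℝ → ℂ) x = 0) →
      ∀ᵐ x ∂(volume : Measure ℝ), x ≤ a → (B f : ℝ → ℂ) x = 0)
    (J : Lp ℂ 2 (wMeasure ν) →L[ℂ] Lp ℂ 2 (wMeasure ν))
    (hJ : ∀ f : Lp ℂ 2 (wMeasure ν),
      (J f : ℝ → ℂ) =ᵐ[volume] fun x => ∫ t in Set.Iic x, (f : ℝ → ℂ) t) :
    ∀ f g : Lp ℂ 2 (wMeasure ν),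
      ((g : ℝ → ℂ) =ᵐ[volume] Set.indicator (Set.Iic (0 : ℝ)) (f : ℝ → ℂ)) →
      |(inner ℂ g (B (J f)) : ℂ).re| ≤ ‖B‖ * ν⁻¹ * ‖g‖ ^ 2 := by
  intro f g hg
  have hcausal : ∀ᵐ x, x ≤ 0 → B (J (f - g)) x = 0 := by
    refine hBcausal 0 _ ?_
    filter_upwards [hJ (f - g)] with x hx hx0
    rw [hx]
    refine setIntegral_Iic_eq_zero_of_ae_eq_zero ?_ hx0
    filter_upwards [(volume_ac_wMeasure ν).ae_eq (Lp.coeFn_sub f g), hg] with t hsub hgt ht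
    rw [hsub, Pi.sub_apply, hgt, indicator_of_mem (mem_Iic.2 ht), sub_self]
  have horth : inner ℂ g (B (J (f - g))) = 0 := by
    refine L2.inner_eq_zero_of_ae_eq_zero_or ?_
    filter_upwards [(wMeasure_ac_volume ν).ae_eq hg, (wMeasure_ac_volume ν).ae_le hcausal]
      with x hgx hx
    by_cases hx0 : x ≤ 0
    · exact .inr (hx hx0)
    · exact .inl (by rw [hgx, indicator_of_notMem (by simpa using hx0)])
  have hinner : inner ℂ g (B (J f)) = inner ℂ g (B (J g)) := by
    rw [show f = g + (f - g) by abel, map_add, map_add, inner_add_right, horth, add_zero]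
  calc |(inner ℂ g (B (J f))).re|
      ≤ ‖g‖ * ‖B (J g)‖ := by
        rw [hinner]; exact (abs_re_le_norm _).trans (norm_inner_le_norm _ _)
    _ ≤ ‖g‖ * (‖B‖ * (ν⁻¹ * ‖g‖)) := by
        gcongr; exact B.le_opNorm_of_le (norm_le_inv_mul_norm_of_ae_eq_integral_Iic hν (hJ g))
    _ = ‖B‖ * ν⁻¹ * ‖g‖ ^ 2 := by ring
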